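/- arXiv:1301.4565 — 2 statements merged into one kernel-verified Lean document; each statement's English description precedes it below -/
import Mathlib

section
/- For all natural numbers n and k with k ≤ n, ∑_{l=0}^{n} C(n+1, l+1) · C(-1/2, l-k) = C(n + 1/2, n - k) = (2n+1)!! / (2^{n-k} (n-k)! (2k+1)!!), where C(-1/2, j) denotes the generalized binomial coefficient ((-1/2)(-1/2-1)···(-1/2-j+1))/j! for j ≥ 0 and is 0 for j < 0. -/
/-!
Reflecting the summation index `l ↦ n - l` turns the sum into the Chu–Vandermonde convolution
`∑ⱼ C(n+1, j) C(-1/2, (n-k) - j) = C(n + 1/2, n - k)`, for which we use `Ring.add_choose_eq`.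
For the closed form, `(n + 1/2)(n - 1/2)⋯(k + 3/2) = (2n+1)!! / (2^(n-k) (2k+1)!!)`.
-/

/-- Generalized binomial coefficient `C(x, j)` for real `x` and integer `j`,
equal to `x (x-1) ⋯ (x-j+1) / j!` for `j ≥ 0` and `0` for `j < 0`. -/
noncomputable def gchoose (x : ℝ) (j : ℤ) : ℝ :=
  if 0 ≤ j then (∏ i ∈ Finset.range j.toNat, (x - i)) / (Nat.factorial j.toNat : ℝ) else 0

open Finset Polynomial Nat

lemma gchoose_of_neg (x : ℝ) {j : ℤ} (h : j < 0) : gchoose x j = 0 := by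
  simp [gchoose, not_le.mpr h]

lemma gchoose_natCast (x : ℝ) (m : ℕ) : gchoose x m = Ring.choose x m := by
  rw [Ring.choose_eq_smul, ← aeval_eq_smeval, aeval_def, eval₂_eq_eval_map, descPochhammer_map,
    descPochhammer_eval_eq_prod_range]
  simp [gchoose, div_eq_inv_mul]

lemma sum_range_choose_mul_gchoose_sub (x : ℝ) (N : ℕ) {m s : ℕ} (hs : m < s) :
    ∑ j ∈ range s, (N.choose j : ℝ) * gchoose x ((m : ℤ) - j) = Ring.choose (x + N) m := by
  have htrunc : ∑ j ∈ range s, (N.choose j : ℝ) * gchoose x ((m : ℤ) - j) =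
      ∑ j ∈ range (m + 1), (N.choose j : ℝ) * gchoose x ((m : ℤ) - j) := by
    refine (sum_subset (range_subset_range.2 hs) fun j _ hj => ?_).symm
    rw [gchoose_of_neg x (by rw [mem_range] at hj; omega), mul_zero]
  rw [htrunc, Ring.add_choose_eq m (Commute.all _ _), ← Nat.sum_antidiagonal_swap]
  simp only [Prod.fst_swap, Prod.snd_swap]
  rw [Nat.sum_antidiagonal_eq_sum_range_succ (fun a b => Ring.choose x b * Ring.choose (N : ℝ) a)]
  refine sum_congr rfl fun j hj => ?_
  rw [← Nat.cast_sub (mem_range_succ_iff.1 hj), gchoose_natCast, Ring.choose_natCast, mul_comm]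

lemma sum_range_choose_succ_mul_gchoose_sub (x : ℝ) (k m : ℕ) :
    ∑ l ∈ range (k + m + 1), ((k + m + 1).choose (l + 1) : ℝ) * gchoose x ((l : ℤ) - k) =
      Ring.choose (x + (k + m + 1 : ℕ)) m := by
  rw [← sum_range_reflect]
  have hreflect : ∀ j ∈ range (k + m + 1),
      ((k + m + 1).choose (k + m + 1 - 1 - j + 1) : ℝ) *
          gchoose x ((k + m + 1 - 1 - j : ℕ) - k) =
        ((k + m + 1).choose j : ℝ) * gchoose x ((m : ℤ) - j) := by
    intro j hj
    rw [mem_range] at hj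
    rw [show k + m + 1 - 1 - j + 1 = k + m + 1 - j by omega, Nat.choose_symm hj.le,
      show ((k + m + 1 - 1 - j : ℕ) : ℤ) - k = m - j by omega]
  rw [sum_congr rfl hreflect, sum_range_choose_mul_gchoose_sub _ _ (by omega)]

lemma two_pow_mul_prod_range_add_half (k m : ℕ) :
    2 ^ m * (∏ i ∈ range m, (((k + m : ℕ) : ℝ) + 1 / 2 - i)) * (2 * k + 1)‼ =
      (2 * (k + m) + 1)‼ := by
  induction m with
  | zero => simp
  | succ m ih =>
    rw [prod_range_succ', ← add_assoc, show 2 * (k + m + 1) + 1 = 2 * (k + m) + 1 + 2 by ring,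
      Nat.doubleFactorial_add_two, Nat.cast_mul, ← ih]
    push_cast
    ring_nf

lemma gchoose_add_half (k m : ℕ) :
    gchoose (((k + m : ℕ) : ℝ) + 1 / 2) m =
      (2 * (k + m) + 1)‼ / (2 ^ m * m ! * (2 * k + 1)‼) := by
  rw [← two_pow_mul_prod_range_add_half]
  have : ((2 * k + 1)‼ : ℝ) ≠ 0 := by positivity
  simp only [gchoose, Nat.cast_nonneg, ↓reduceIte, Int.toNat_natCast]
  field_simp

theorem binom_half_sum_identity (n k : ℕ) (hkn : k ≤ n) :
    (∑ l ∈ Finset.range (n + 1),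
        (Nat.choose (n + 1) (l + 1) : ℝ) * gchoose (-1/2) ((l : ℤ) - (k : ℤ)))
      = gchoose ((n : ℝ) + 1/2) ((n : ℤ) - (k : ℤ)) ∧
    gchoose ((n : ℝ) + 1/2) ((n : ℤ) - (k : ℤ))
      = (Nat.doubleFactorial (2 * n + 1) : ℝ) /
          (2 ^ (n - k) * (Nat.factorial (n - k) : ℝ) *
            (Nat.doubleFactorial (2 * k + 1) : ℝ)) := by
  obtain ⟨m, rfl⟩ := Nat.exists_eq_add_of_le hkn
  rw [show ((k + m : ℕ) : ℤ) - k = m by push_cast; ring, Nat.add_sub_cancel_left]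
  refine ⟨?_, gchoose_add_half k m⟩
  rw [sum_range_choose_succ_mul_gchoose_sub, gchoose_natCast]
  congr 1
  push_cast
  ring
end

section
/- Let p ≥ 1, 0 ≤ q ≤ p-1. For the (2p-1)-sphere of radius 1, the zeta function of coexact q-forms satisfies ζ(0, U_{q,S^{2p-1}}) = (-1)^{q+1}, where ζ(s, U_{q,S^{2p-1}}) = ∑_{n=1}^{∞} m_{cex,q,n} λ_{q,n}^{-s} with λ_{q,n} = (n+q)(n+2p-q-2) and m_{cex,q,n} = (2/(q!(2p-q-2)!)) ∏_{j=1, j≠q+1}^{p} (n-1+j)(2p+n-1-j), the value at s = 0 being that of the meromorphic continuation expressed via ζ(s, U_q) = (2/(q!(2p-q-2)!)) ∑_{j=0}^{p-1} e_{p-1-j}(d^q) ζ_{-α_q, j}(s) with ζ_{t,c}(s) = ∑_{n=t+1}^{∞} (n²-t²)^{c-s}, and ζ_{t,0}(0) = -1/2 - t, ζ_{t,c}(0) = (-1)^{c+1} t^{2c}/2 - ∑_{n=1}^{t-1}(n²-t²)^c for c ≥ 1. -/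
/-!
Put `t = p - 1 - q`. Reindexing `j = p - m` shows that the numbers `d^q_j` are the
`t² - m²` for `m ∈ {0, …, p - 1} \ {t}`, so `Q(x) = ∑_j e_{p-1-j}(d^q) x^j = ∏_j (x + d^q_j)`
vanishes at `x = n² - t²` for every `n < p` with `n ≠ t`. Since
`(-1)^{j+1} t^{2j} / 2 = -(0² - t²)^j / 2`, the bracketed sum equals
`e_{p-1}(-1/2 - t) - (Q(0² - t²) - e_{p-1}) / 2 - ∑_{n=1}^{t-1} (Q(n² - t²) - e_{p-1})`,
which is `-e_{p-1}` when `t > 0` and `-e_{p-1} / 2` when `t = 0`. Finally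
`e_{p-1} = ∏_j d^q_j = (-1)^q q! (2p-q-2)! / 2` when `t > 0`, and `(-1)^q (q!)²` when `t = 0`
(then `2p - q - 2 = q`).
-/

/-- The multiset of the `p-1` numbers `d^q_j = (j-q-1)(2p-q-j-1)`,
`j ∈ {1,…,p} \ {q+1}`. -/
noncomputable def dMultiset (p q : ℕ) : Multiset ℝ :=
  (((Finset.Icc 1 p).erase (q + 1)).val).map
    (fun j => ((j : ℝ) - q - 1) * (2 * p - q - j - 1))

open Finset Nat

theorem Multiset.esymm_card {R : Type*} [CommSemiring R] (s : Multiset R) :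
    s.esymm (card s) = s.prod := by
  simp [Multiset.esymm, Multiset.powersetCard_self]

theorem Multiset.sum_Icc_esymm_mul_pow {R : Type*} [CommRing R] (s : Multiset R) (x : R) :
    ∑ j ∈ Finset.Icc 1 (card s), s.esymm (card s - j) * x ^ j
      = (s.map (x + ·)).prod - s.esymm (card s) := by
  have vieta := congrArg (Polynomial.eval x) (Multiset.prod_X_add_C_eq_sum_esymm s)
  simp only [Polynomial.eval_multiset_prod, Multiset.map_map, Function.comp_def,
    Polynomial.eval_add, Polynomial.eval_X, Polynomial.eval_C, Polynomial.eval_finsetSum,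
    Polynomial.eval_mul, Polynomial.eval_pow] at vieta
  rw [vieta, ← sum_range_reflect, sum_range_eq_add_Ico _ (succ_pos _), succ_eq_add_one,
    Ico_add_one_right_eq_Icc]
  simp only [add_tsub_cancel_right, tsub_zero, tsub_self, pow_zero, mul_one, add_sub_cancel_left]
  exact sum_congr rfl fun j hj => by rw [Nat.sub_sub_self (mem_Icc.1 hj).2]

/-- The value `ζ_{t,c}(0)` of the continuation of `ζ_{t,c}(s) = ∑_{n > t} (n² - t²)^{c-s}`. -/
noncomputable def zetaShiftAtZero (t c : ℕ) : ℝ :=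
  if c = 0 then -(1 / 2) - t
  else (-1) ^ (c + 1) * (t : ℝ) ^ (2 * c) / 2 - ∑ n ∈ Icc 1 (t - 1), ((n : ℝ) ^ 2 - (t : ℝ) ^ 2) ^ c

section ZetaShiftAtZero

variable (d : Multiset ℝ)

theorem sum_range_esymm_mul_zetaShiftAtZero (t : ℕ) :
    ∑ c ∈ range (d.card + 1), d.esymm (d.card - c) * zetaShiftAtZero t c
      = d.esymm d.card * (-(1 / 2) - t) +
        ∑ c ∈ Icc 1 d.card, d.esymm (d.card - c) *
          ((-1 : ℝ) ^ (c + 1) * (t : ℝ) ^ (2 * c) / 2 -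
            ∑ n ∈ Icc 1 (t - 1), ((n : ℝ) ^ 2 - (t : ℝ) ^ 2) ^ c) := by
  rw [sum_range_eq_add_Ico _ (succ_pos _), succ_eq_add_one, Ico_add_one_right_eq_Icc,
    zetaShiftAtZero, if_pos rfl, tsub_zero]
  congr 1
  exact sum_congr rfl fun c hc => by
    rw [zetaShiftAtZero, if_neg (by simp only [mem_Icc] at hc; omega)]

theorem sum_esymm_mul_zetaShiftAtZero_zero :
    ∑ c ∈ range (d.card + 1), d.esymm (d.card - c) * zetaShiftAtZero 0 c = -d.esymm d.card / 2 := by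
  rw [sum_range_esymm_mul_zetaShiftAtZero,
    sum_eq_zero fun c hc => by simp [zero_pow (show 2 * c ≠ 0 by simp at hc; omega)]]
  simp only [Nat.cast_zero, sub_zero, add_zero]
  ring

theorem sum_esymm_mul_zetaShiftAtZero_of_pos {t : ℕ} (ht : 0 < t)
    (hroot : ∀ n < t, (d.map ((n : ℝ) ^ 2 - t ^ 2 + ·)).prod = 0) :
    ∑ c ∈ range (d.card + 1), d.esymm (d.card - c) * zetaShiftAtZero t c = -d.esymm d.card := by
  -- up to sign `t^{2c}` is `(0² - t²)^c`, so that `n = 0` joins the roots `n² - t²` of `Q`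
  have hterm (c : ℕ) : d.esymm (d.card - c) * ((-1 : ℝ) ^ (c + 1) * (t : ℝ) ^ (2 * c) / 2 -
        ∑ n ∈ Icc 1 (t - 1), ((n : ℝ) ^ 2 - (t : ℝ) ^ 2) ^ c)
      = -(d.esymm (d.card - c) * (((0 : ℕ) : ℝ) ^ 2 - t ^ 2) ^ c) / 2 -
        ∑ n ∈ Icc 1 (t - 1), d.esymm (d.card - c) * ((n : ℝ) ^ 2 - t ^ 2) ^ c := by
    rw [mul_sub, mul_sum, Nat.cast_zero, zero_pow two_ne_zero, zero_sub, neg_pow, pow_mul]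
    ring
  have hQ (n : ℕ) (hn : n < t) :
      ∑ c ∈ Icc 1 d.card, d.esymm (d.card - c) * ((n : ℝ) ^ 2 - t ^ 2) ^ c = -d.esymm d.card := by
    rw [Multiset.sum_Icc_esymm_mul_pow, hroot n hn, zero_sub]
  rw [sum_range_esymm_mul_zetaShiftAtZero, sum_congr rfl fun c _ => hterm c, sum_sub_distrib,
    ← sum_div, sum_neg_distrib, sum_comm, hQ 0 ht, sum_congr rfl fun n hn => hQ n (by grind),
    sum_const, card_Icc, nsmul_eq_mul, Nat.sub_add_cancel ht, Nat.cast_sub ht]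
  ring

end ZetaShiftAtZero

theorem dMultiset_eq (q t : ℕ) :
    dMultiset (q + t + 1) q =
      ((range (q + t + 1)).erase t).val.map (fun m : ℕ => ((t : ℝ) - m) * (t + m)) := by
  have hreflect : (Icc 1 (q + t + 1)).erase (q + 1) =
      ((range (q + t + 1)).erase t).image (q + t + 1 - ·) := by
    ext j
    simp only [mem_erase, mem_Icc, mem_image, mem_range]
    constructor
    · rintro ⟨hj, h1, h2⟩
      exact ⟨q + t + 1 - j, ⟨by omega, by omega⟩, by omega⟩
    · rintro ⟨m, ⟨hm, hm'⟩, rfl⟩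
      omega
  have hinj : Set.InjOn (q + t + 1 - ·) ((range (q + t + 1)).erase t : Set ℕ) := by
    intro a ha b hb hab
    simp only [coe_erase, coe_range, Set.mem_sdiff, Set.mem_Iio] at ha hb
    simp only at hab
    omega
  rw [dMultiset, hreflect, image_val_of_injOn hinj]
  -- `dMultiset` casts its `Multiset ℕ` to `Multiset ℝ` through the monad structure of `Multiset`
  simp only [Multiset.pure_def, Multiset.bind_def, Multiset.bind_singleton, Multiset.map_map]
  refine Multiset.map_congr rfl fun m hm => ?_
  have hm : m ≤ q + t + 1 := (mem_range.1 (mem_of_mem_erase hm)).le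
  simp only [Function.comp_apply, Nat.cast_sub hm]
  push_cast
  ring

theorem card_dMultiset (q t : ℕ) : Multiset.card (dMultiset (q + t + 1) q) = q + t := by
  rw [dMultiset_eq, Multiset.card_map, card_val, card_erase_of_mem (mem_range.2 (by omega)),
    card_range, Nat.add_sub_cancel]

theorem prod_map_add_dMultiset_eq_zero {q t n : ℕ} (hn : n < q + t + 1) (hnt : n ≠ t) :
    ((dMultiset (q + t + 1) q).map ((n : ℝ) ^ 2 - t ^ 2 + ·)).prod = 0 := by
  rw [dMultiset_eq, Multiset.map_map]
  exact Multiset.prod_eq_zero (Multiset.mem_map.2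
    ⟨n, mem_erase.2 ⟨hnt, mem_range.2 hn⟩, by simp only [Function.comp_apply]; ring⟩)

theorem prod_range_natCast_sub (t : ℕ) : ∏ m ∈ range t, ((t : ℝ) - m) = t ! := by
  rw [← descFactorial_self, descFactorial_eq_prod_range, Nat.cast_prod]
  exact prod_congr rfl fun m hm => by rw [Nat.cast_sub (mem_range.1 hm).le]

theorem prod_range_natCast_add (t k : ℕ) : ∏ m ∈ range k, ((t : ℝ) + m) = t.ascFactorial k := by
  rw [ascFactorial_eq_prod_range]
  push_cast
  rfl

theorem two_mul_prod_range_sub_mul_add {t : ℕ} (ht : 0 < t) :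
    2 * ∏ m ∈ range t, ((t : ℝ) - m) * (t + m) = (2 * t)! := by
  obtain ⟨s, rfl⟩ := Nat.exists_eq_add_of_lt ht
  rw [prod_mul_distrib, prod_range_natCast_sub, prod_range_natCast_add, zero_add,
    show 2 * (s + 1) = s + (s + 1) + 1 by ring, factorial_succ (s + (s + 1)),
    ← factorial_mul_ascFactorial s (s + 1), factorial_succ s]
  push_cast
  ring

theorem prod_erase_sub_mul_add (q t : ℕ) :
    ∏ m ∈ (range (q + t + 1)).erase t, ((t : ℝ) - m) * (t + m) =
      (∏ m ∈ range t, ((t : ℝ) - m) * (t + m)) * ((-1) ^ q * q ! * (2 * t + 1).ascFactorial q) := by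
  have hsplit : (range (q + t + 1)).erase t = range t ∪ Ico (t + 1) (q + t + 1) := by
    ext m
    simp only [mem_erase, mem_range, mem_union, mem_Ico]
    omega
  have hdisj : Disjoint (range t) (Ico (t + 1) (q + t + 1)) := by
    simp only [disjoint_left, mem_range, mem_Ico]
    omega
  rw [hsplit, prod_union hdisj, prod_Ico_eq_prod_range, show q + t + 1 - (t + 1) = q by omega]
  congr 1
  have hfactor (k : ℕ) : ((t : ℝ) - (t + 1 + k : ℕ)) * (t + (t + 1 + k : ℕ)) =
      (-1) * ((k + 1) * ((2 * t + 1 : ℕ) + k)) := by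
    push_cast
    ring
  rw [prod_congr rfl fun k _ => hfactor k, prod_mul_distrib, prod_mul_distrib, prod_const,
    card_range, prod_range_natCast_add, ← prod_range_add_one_eq_factorial]
  push_cast
  ring

theorem esymm_dMultiset_top (q t : ℕ) :
    (dMultiset (q + t + 1) q).esymm (q + t) =
      (∏ m ∈ range t, ((t : ℝ) - m) * (t + m)) * ((-1) ^ q * q ! * (2 * t + 1).ascFactorial q) := by
  have h := Multiset.esymm_card (dMultiset (q + t + 1) q)
  rw [card_dMultiset] at h
  rw [h, dMultiset_eq, prod_map_val, prod_erase_sub_mul_add]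

theorem sum_esymm_dMultiset_mul_zetaShiftAtZero (q t : ℕ) :
    ∑ c ∈ range (q + t + 1), (dMultiset (q + t + 1) q).esymm (q + t - c) * zetaShiftAtZero t c
      = -((-1) ^ q * q ! * (2 * t + q)!) / 2 := by
  obtain rfl | ⟨s, rfl⟩ : t = 0 ∨ ∃ s, t = s + 1 := by cases t <;> simp
  · have h := sum_esymm_mul_zetaShiftAtZero_zero (dMultiset (q + 0 + 1) q)
    rw [card_dMultiset q 0] at h
    rw [h, esymm_dMultiset_top q 0]
    simp [one_ascFactorial]
  · have h := sum_esymm_mul_zetaShiftAtZero_of_pos (dMultiset (q + (s + 1) + 1) q) (succ_pos s)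
      fun n hn => prod_map_add_dMultiset_eq_zero (by omega) hn.ne
    rw [card_dMultiset] at h
    rw [h, esymm_dMultiset_top]
    have hP := two_mul_prod_range_sub_mul_add (succ_pos s)
    have hfac : ((2 * (s + 1))! : ℝ) * (2 * (s + 1) + 1).ascFactorial q = (2 * (s + 1) + q)! := by
      exact_mod_cast factorial_mul_ascFactorial (2 * (s + 1)) q
    linear_combination (-(-1) ^ q * q ! / 2 : ℝ) * hfac +
      (-(-1) ^ q * q ! * (2 * (s + 1) + 1).ascFactorial q / 2 : ℝ) * hP

/-- The value at `s = 0` of the zeta function of coexact `q`-forms on `S^{2p-1}`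
is `(-1)^{q+1}`, expressed as a finite combinatorial identity via the
meromorphic continuation `ζ(s, U_q) = (2/(q!(2p-q-2)!)) ∑_j e_{p-1-j}(d^q) ζ_{-α_q,j}(s)`
with `ζ_{t,0}(0) = -1/2 - t` and `ζ_{t,c}(0) = (-1)^{c+1} t^{2c}/2 - ∑_{n=1}^{t-1}(n²-t²)^c`. -/
theorem zeta_coexact_at_zero (p q : ℕ) (hp : 1 ≤ p) (hq : q ≤ p - 1) :
    (2 / ((Nat.factorial q : ℝ) * (Nat.factorial (2 * p - q - 2) : ℝ))) *
        ((dMultiset p q).esymm (p - 1) * (-(1 / 2) - ((p : ℝ) - q - 1)) +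
          ∑ j ∈ Finset.Icc 1 (p - 1),
            (dMultiset p q).esymm (p - 1 - j) *
              ((-1 : ℝ) ^ (j + 1) * ((q : ℝ) - p + 1) ^ (2 * j) / 2 -
                ∑ n ∈ Finset.Icc 1 (p - q - 2),
                  ((n : ℝ) ^ 2 - ((q : ℝ) - p + 1) ^ 2) ^ j))
      = (-1 : ℝ) ^ (q + 1) := by
  obtain ⟨t, rfl⟩ : ∃ t, p = q + t + 1 := ⟨p - 1 - q, by omega⟩
  have hα : (q : ℝ) - ((q + t + 1 : ℕ) : ℝ) + 1 = -t := by push_cast; ring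
  have hτ : ((q + t + 1 : ℕ) : ℝ) - q - 1 = t := by push_cast; ring
  have hzeta := sum_range_esymm_mul_zetaShiftAtZero (dMultiset (q + t + 1) q) t
  rw [card_dMultiset, sum_esymm_dMultiset_mul_zetaShiftAtZero] at hzeta
  simp only [hα, hτ, even_two_mul, Even.neg_pow, neg_sq, Nat.add_sub_cancel,
    show q + t + 1 - q - 2 = t - 1 by omega, show 2 * (q + t + 1) - q - 2 = 2 * t + q by omega,
    ← hzeta]
  field_simp
  ring
end
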